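/- Validity of the early-stopping logic-based Benders cut: let Ŝ ⊆ P be the patient set and ŷ ≥ 1 the number of ORs of the current master solution, and let L be any lower bound on the subproblem optimum, i.e. 0 ≤ L ≤ Q(Ŝ, ŷ). Then for every S' ⊆ P and every y' with 1 ≤ y' ≤ ŷ, one has Q(S', y') ≥ L · (1 − |Ŝ \ S'|). -/
import Mathlib


open Finset

/-- The single-OR cancellation cost of a set `A` of patients assigned to an operating
room with time limit `B`, for duration function `T`. -/
noncomputable def qcost {α : Type*} [DecidableEq α] (c T : α → ℝ) {B : ℝ} (hB : 0 ≤ B)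
    (A : Finset α) : ℝ :=
  (A.powerset.filter (fun Z => ∑ p ∈ Z, T p ≤ B)).inf'
    ⟨∅, by simp [hB]⟩ (fun Z => ∑ p ∈ A \ Z, c p)

/-- The optimal expected cancellation cost of assigning the patients of `S` to `y`
opened operating rooms: the minimum, over assignments `a` of patients to ORs, of the
average over scenarios `s ∈ 𝒮` of the sum over ORs `r` of the single-OR cancellation
cost of the patients of `S` assigned to `r`. -/
noncomputable def Qexp {α σ : Type*} [DecidableEq α] (c : α → ℝ) (𝒮 : Finset σ)
    (T : σ → α → ℝ) {B : ℝ} (hB : 0 ≤ B) (S : Finset α) (y : ℕ) : ℝ :=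
  sInf { v : ℝ | ∃ a : α → Fin y,
    v = (𝒮.card : ℝ)⁻¹ *
      ∑ s ∈ 𝒮, ∑ r : Fin y, qcost c (T s) hB (S.filter (fun p => a p = r)) }
open Finset

lemma qcost_nonneg {α : Type*} [DecidableEq α] (c T : α → ℝ) {B : ℝ} (hB : 0 ≤ B)
    (A : Finset α) (hc : ∀ p ∈ A, 0 ≤ c p) : 0 ≤ qcost c T hB A := by
  apply Finset.le_inf'
  intro Z hZ
  exact Finset.sum_nonneg fun p hp => hc p (Finset.mem_sdiff.mp hp).1

lemma qcost_empty {α : Type*} [DecidableEq α] (c T : α → ℝ) {B : ℝ} (hB : 0 ≤ B) :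
    qcost c T hB (∅ : Finset α) = 0 := by
  simp [qcost]

lemma qcost_mono {α : Type*} [DecidableEq α] (c T : α → ℝ) {B : ℝ} (hB : 0 ≤ B)
    {A A' : Finset α} (hAA : A ⊆ A') (hc : ∀ p ∈ A', 0 ≤ c p)
    (hT : ∀ p ∈ A', 0 ≤ T p) : qcost c T hB A ≤ qcost c T hB A' := by
  apply Finset.le_inf'
  intro Z' hZ'
  rw [Finset.mem_filter, Finset.mem_powerset] at hZ'
  obtain ⟨hZ'A, hZ'B⟩ := hZ'
  have hmem : Z' ∩ A ∈ (A.powerset.filter (fun Z => ∑ p ∈ Z, T p ≤ B)) := by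
    rw [Finset.mem_filter, Finset.mem_powerset]
    refine ⟨Finset.inter_subset_right, le_trans ?_ hZ'B⟩
    exact Finset.sum_le_sum_of_subset_of_nonneg Finset.inter_subset_left
      (fun p hp _ => hT p (hZ'A hp))
  refine le_trans (Finset.inf'_le _ hmem) ?_
  apply Finset.sum_le_sum_of_subset_of_nonneg
  · intro p hp
    rw [Finset.mem_sdiff] at hp ⊢
    rw [Finset.mem_inter] at hp
    exact ⟨hAA hp.1, fun h => hp.2 ⟨h, hp.1⟩⟩
  · intro p hp _
    exact hc p (Finset.mem_sdiff.mp hp).1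
/-- Validity of the early-stopping logic-based Benders cut: if `Ŝ ⊆ P`, `ŷ ≥ 1`, and
`L` is any lower bound on the subproblem optimum with `0 ≤ L ≤ Q(Ŝ, ŷ)`, then for
every `S' ⊆ P` and every `y'` with `1 ≤ y' ≤ ŷ`, one has
`Q(S', y') ≥ L · (1 − |Ŝ \ S'|)`. -/
theorem early_stopping_lbbd_cut_valid {α σ : Type*} [DecidableEq α]
    (P : Finset α) (c : α → ℝ) (𝒮 : Finset σ) (h𝒮 : 𝒮.Nonempty)
    (T : σ → α → ℝ) (B : ℝ)
    (hc : ∀ p ∈ P, 0 ≤ c p) (hT : ∀ s ∈ 𝒮, ∀ p ∈ P, 0 ≤ T s p) (hB : 0 ≤ B)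
    (Shat : Finset α) (hShat : Shat ⊆ P) (yhat : ℕ) (hyhat : 1 ≤ yhat)
    (L : ℝ) (hL0 : 0 ≤ L) (hL : L ≤ Qexp c 𝒮 T hB Shat yhat)
    (S' : Finset α) (hS' : S' ⊆ P) (y' : ℕ) (hy'1 : 1 ≤ y') (hy' : y' ≤ yhat) :
    Qexp c 𝒮 T hB S' y' ≥ L * (1 - ((Shat \ S').card : ℝ)) := by
  -- nonemptiness of the S' feasible set
  have hne : {v : ℝ | ∃ a : α → Fin y',
      v = (𝒮.card : ℝ)⁻¹ *
        ∑ s ∈ 𝒮, ∑ r : Fin y', qcost c (T s) hB (S'.filter (fun p => a p = r))}.Nonempty := by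
    exact ⟨_, fun _ => ⟨0, hy'1⟩, rfl⟩
  -- every element of the S' set is nonnegative
  have hnn : ∀ v ∈ {v : ℝ | ∃ a : α → Fin y',
      v = (𝒮.card : ℝ)⁻¹ *
        ∑ s ∈ 𝒮, ∑ r : Fin y', qcost c (T s) hB (S'.filter (fun p => a p = r))}, 0 ≤ v := by
    rintro v ⟨a, rfl⟩
    apply mul_nonneg (by positivity)
    apply Finset.sum_nonneg; intro s hs
    apply Finset.sum_nonneg; intro r _
    exact qcost_nonneg _ _ hB _ (fun p hp => hc p (hS' (Finset.mem_filter.mp hp).1))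
  by_cases hsub : Shat ⊆ S'
  · -- card = 0, RHS = L
    have hcard : ((Shat \ S').card : ℝ) = 0 := by
      rw [Finset.sdiff_eq_empty_iff_subset.mpr hsub]; simp
    rw [hcard]
    ring_nf
    -- show L ≤ Qexp c 𝒮 T hB S' y'
    rw [Qexp]
    apply le_csInf hne
    rintro v ⟨a', rfl⟩
    refine le_trans hL ?_
    -- Qexp Shat yhat ≤ this value, via assignment castLE ∘ a'
    rw [Qexp]
    have hbdd : BddBelow {v : ℝ | ∃ a : α → Fin yhat,
        v = (𝒮.card : ℝ)⁻¹ *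
          ∑ s ∈ 𝒮, ∑ r : Fin yhat, qcost c (T s) hB (Shat.filter (fun p => a p = r))} := by
      refine ⟨0, ?_⟩
      rintro v ⟨a, rfl⟩
      apply mul_nonneg (by positivity)
      apply Finset.sum_nonneg; intro s hs
      apply Finset.sum_nonneg; intro r _
      exact qcost_nonneg _ _ hB _ (fun p hp => hc p (hShat (Finset.mem_filter.mp hp).1))
    refine le_trans (csInf_le hbdd ⟨fun p => Fin.castLE hy' (a' p), rfl⟩) ?_
    apply mul_le_mul_of_nonneg_left ?_ (by positivity)
    apply Finset.sum_le_sum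
    intro s hs
    -- per-scenario comparison
    have hinj : Function.Injective (Fin.castLE hy') := Fin.castLE_injective hy'
    have hzero : ∀ r ∈ (Finset.univ : Finset (Fin yhat)),
        r ∉ Finset.univ.image (Fin.castLE hy') →
        qcost c (T s) hB (Shat.filter (fun p => Fin.castLE hy' (a' p) = r)) = 0 := by
      intro r _ hr
      have : Shat.filter (fun p => Fin.castLE hy' (a' p) = r) = ∅ := by
        apply Finset.filter_eq_empty_iff.mpr
        intro p _ hpr
        exact hr (Finset.mem_image.mpr ⟨a' p, Finset.mem_univ _, hpr⟩)
      rw [this, qcost_empty]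
    calc ∑ r : Fin yhat, qcost c (T s) hB (Shat.filter (fun p => Fin.castLE hy' (a' p) = r))
        = ∑ r ∈ Finset.univ.image (Fin.castLE hy'),
            qcost c (T s) hB (Shat.filter (fun p => Fin.castLE hy' (a' p) = r)) :=
          (Finset.sum_subset (Finset.subset_univ _) hzero).symm
      _ = ∑ r' : Fin y',
            qcost c (T s) hB (Shat.filter (fun p => Fin.castLE hy' (a' p) = Fin.castLE hy' r')) :=
          Finset.sum_image (fun x _ y _ h => hinj h)
      _ ≤ ∑ r' : Fin y', qcost c (T s) hB (S'.filter (fun p => a' p = r')) := by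
          apply Finset.sum_le_sum
          intro r' _
          apply qcost_mono c (T s) hB
          · intro p hp
            rw [Finset.mem_filter] at hp ⊢
            exact ⟨hsub hp.1, hinj hp.2⟩
          · intro p hp; exact hc p (hS' (Finset.mem_filter.mp hp).1)
          · intro p hp; exact hT s hs p (hS' (Finset.mem_filter.mp hp).1)
  · -- card ≥ 1, RHS ≤ 0 ≤ Qexp
    have hcard : (1 : ℝ) ≤ ((Shat \ S').card : ℝ) := by
      have : (Shat \ S').Nonempty := by
        rw [Finset.sdiff_nonempty]; exact hsub
      exact_mod_cast Finset.card_pos.mpr this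
    have hrhs : L * (1 - ((Shat \ S').card : ℝ)) ≤ 0 :=
      mul_nonpos_of_nonneg_of_nonpos hL0 (by linarith)
    refine le_trans hrhs ?_
    rw [Qexp]
    exact le_csInf hne hnn
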